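/- Let 1 ≤ q < 2, let V be a real Banach space, let ω be a control function, and let Ω : [0,1] → L(V,V) satisfy ‖Ω(t) − Ω(s)‖ ≤ ω(s,t)^{1/q} for all 0 ≤ s ≤ t ≤ 1. Fix 0 < T ≤ 1 and set K := ω(0,T)^{1/q} (1 + 2^{2/q} ζ(2/q)). Define I^0(t) := Id_V and, recursively for n ≥ 0, I^{n+1}(t) := ∫_0^t dΩ · I^n, i.e. I^{n+1}(t) is the limit, as the mesh tends to 0, of the left-point Riemann–Stieltjes sums Σ_{i=1}^N (Ω(t_i) − Ω(t_{i−1})) ∘ I^n(t_{i−1}) over finite partitions {0 = t_0 < ⋯ < t_N = t}. Then all these limits exist, and for every n ≥ 1 and all 0 ≤ s ≤ t ≤ T, ‖I^n(t) − I^n(s)‖ ≤ K^{n−1} ω(s,t)^{1/q}. -/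

import Mathlib

/-!
Young's maximal inequality: in a partition of `[s, t]` into `N + 1` intervals, pigeonhole gives an
interior point whose two adjacent intervals have total `ω`-size at most `2 ω(s, t) / N`. Removing it
changes the Riemann–Stieltjes sum by `(Ω tᵢ₊₁ - Ω tᵢ) ∘ (G tᵢ - G tᵢ₋₁)`, of norm at most
`C (2 ω(s, t) / N) ^ θ` with `θ = α + β > 1`; removing the points one by one, the sum differs from
`(Ω t - Ω s) ∘ G s` by at most `C 2^θ ζ(θ) ω(s, t) ^ θ`.

Applied on each interval of a partition `P`, this compares the sum over `P` with the sum over its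
common refinement with any `Q` (obtained by clamping `Q` into the intervals of `P`), up to
`C 2^θ ζ(θ) ω(s, t) maxᵢ ω(tᵢ, tᵢ₊₁) ^ (θ - 1)`; so the sums are Cauchy as the mesh tends to `0`.
The same inequality bounds the increment of the integral over `[s, t]` by
`(B + C 2^θ ζ(θ) ω(0, T) ^ β) ω(s, t) ^ α`, where `B` bounds the integrand, and since `Iⁿ⁺¹(0) = 0`
the constants of the iterated integrals grow geometrically with ratio `K`.
-/

universe u

structure Subdivision (s t : ℝ) where
  N : ℕ
  pt : ℕ → ℝ
  pos : 0 < N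
  first : pt 0 = s
  last : pt N = t
  mono : ∀ i, i < N → pt i ≤ pt (i + 1)

noncomputable def Subdivision.mesh {s t : ℝ} (P : Subdivision s t) : ℝ :=
  (Finset.range P.N).sup' (Finset.nonempty_range_iff.mpr P.pos.ne')
    (fun i => P.pt (i + 1) - P.pt i)

/-- A control function on the simplex `Δ = {0 ≤ s ≤ t ≤ 1}`. -/
def IsControl (ω : ℝ → ℝ → ℝ) : Prop :=
  ContinuousOn (fun p : ℝ × ℝ => ω p.1 p.2) {p : ℝ × ℝ | 0 ≤ p.1 ∧ p.1 ≤ p.2 ∧ p.2 ≤ 1} ∧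
  (∀ t, 0 ≤ t → t ≤ 1 → ω t t = 0) ∧
  (∀ s t, 0 ≤ s → s ≤ t → t ≤ 1 → 0 ≤ ω s t) ∧
  (∀ s u t, 0 ≤ s → s ≤ u → u ≤ t → t ≤ 1 → ω s u + ω u t ≤ ω s t)

/-- `ζ(θ) = ∑_{n=1}^∞ n^{-θ}`. -/
noncomputable def zetaR (θ : ℝ) : ℝ := ∑' n : ℕ, ((n : ℝ) + 1) ^ (-θ)

/-- `L = ∫_s^t dΩ · G`: the left-point Riemann–Stieltjes sums
`∑ (Ω(t_i) − Ω(t_{i−1})) ∘ G(t_{i−1})` over partitions of `[s,t]` converge to `L` as the mesh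
tends to `0`. -/
def RSLimit {V : Type u} [NormedAddCommGroup V] [NormedSpace ℝ V]
    (Ω G : ℝ → V →L[ℝ] V) (s t : ℝ) (L : V →L[ℝ] V) : Prop :=
  ∀ ε > (0 : ℝ), ∃ δ > (0 : ℝ), ∀ P : Subdivision s t, P.mesh < δ →
    ‖(∑ i ∈ Finset.range P.N, (Ω (P.pt (i + 1)) - Ω (P.pt i)).comp (G (P.pt i))) - L‖ ≤ ε


open Filter Topology Finset

theorem Real.rpow_mul_rpow_le_add_rpow {a b α β : ℝ} (ha : 0 ≤ a) (hb : 0 ≤ b) (hα : 0 ≤ α)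
    (hβ : 0 ≤ β) : a ^ α * b ^ β ≤ (a + b) ^ (α + β) := by
  rcases eq_or_ne (α + β) 0 with h | h
  · obtain ⟨rfl, rfl⟩ : α = 0 ∧ β = 0 := ⟨by linarith, by linarith⟩
    simp
  rw [Real.rpow_add' (add_nonneg ha hb) h]
  gcongr <;> linarith

theorem summable_nat_add_one_rpow_neg {θ : ℝ} (hθ : 1 < θ) :
    Summable fun n : ℕ => ((n : ℝ) + 1) ^ (-θ) := by
  have := (summable_nat_add_iff 1).mpr (Real.summable_nat_rpow.mpr (by linarith : -θ < -1))
  simpa using this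

theorem zetaR_nonneg (θ : ℝ) : 0 ≤ zetaR θ :=
  tsum_nonneg fun _ => by positivity

theorem sum_range_rpow_div_le {θ w : ℝ} (hθ : 1 < θ) (hw : 0 ≤ w) (N : ℕ) :
    ∑ k ∈ range N, (2 * w / (k + 1)) ^ θ ≤ 2 ^ θ * zetaR θ * w ^ θ := by
  have hterm : ∀ k : ℕ, (2 * w / (k + 1)) ^ θ = 2 ^ θ * w ^ θ * ((k : ℝ) + 1) ^ (-θ) := by
    intro k
    rw [Real.div_rpow (by positivity) (by positivity), Real.mul_rpow zero_le_two hw,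
      Real.rpow_neg (by positivity), div_eq_mul_inv]
  simp only [hterm, ← mul_sum]
  have hsum : ∑ k ∈ range N, ((k : ℝ) + 1) ^ (-θ) ≤ zetaR θ :=
    (summable_nat_add_one_rpow_neg hθ).sum_le_tsum _ fun k _ => by positivity
  calc 2 ^ θ * w ^ θ * ∑ k ∈ range N, ((k : ℝ) + 1) ^ (-θ) ≤ 2 ^ θ * w ^ θ * zetaR θ := by
        gcongr
    _ = 2 ^ θ * zetaR θ * w ^ θ := by ring

/-- Clamping `[c, d]` into `[a, b]` and `[a, b]` into `[c, d]` gives the same interval, unless both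
clamped intervals are single points. -/
theorem clamp_comm_or_degenerate {α : Type*} [LinearOrder α] {a b c d : α} (hab : a ≤ b)
    (hcd : c ≤ d) :
    (max a (min b c) = max c (min d a) ∧ max a (min b d) = max c (min d b)) ∨
      (max a (min b c) = max a (min b d) ∧ max c (min d a) = max c (min d b)) := by
  rcases lt_or_ge b c with hbc | hcb
  · right
    rw [min_eq_left hbc.le, min_eq_left (hbc.le.trans hcd),
      min_eq_right (hab.trans (hbc.le.trans hcd)), min_eq_right (hbc.le.trans hcd),
      max_eq_left (hab.trans hbc.le), max_eq_left hbc.le]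
    exact ⟨rfl, rfl⟩
  rcases lt_or_ge d a with hda | had
  · right
    rw [min_eq_right (hcd.trans (hda.le.trans hab)), min_eq_right (hda.le.trans hab),
      min_eq_left hda.le, min_eq_left (hda.le.trans hab), max_eq_left (hcd.trans hda.le),
      max_eq_left hda.le]
    exact ⟨rfl, rfl⟩
  · left
    rw [min_eq_right hcb, min_eq_right had, max_comm, max_eq_right (le_min hab had), min_comm d b,
      max_eq_right (le_min hcb hcd)]
    exact ⟨rfl, rfl⟩

namespace Subdivision

variable {s t u : ℝ}

theorem pt_le_pt (P : Subdivision s t) {i j : ℕ} (hij : i ≤ j) (hj : j ≤ P.N) :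
    P.pt i ≤ P.pt j := by
  induction j, hij using Nat.le_induction with
  | base => exact le_rfl
  | succ k _ ih => exact (ih (by omega)).trans (P.mono k (by omega))

theorem pt_mem_Icc (P : Subdivision s t) {i : ℕ} (hi : i ≤ P.N) : P.pt i ∈ Set.Icc s t := by
  constructor
  · simpa only [P.first] using P.pt_le_pt (Nat.zero_le i) hi
  · simpa only [P.last] using P.pt_le_pt hi le_rfl

theorem le (P : Subdivision s t) : s ≤ t :=
  (P.pt_mem_Icc (Nat.zero_le P.N)).1.trans (P.pt_mem_Icc (Nat.zero_le P.N)).2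

theorem mesh_lt_iff (P : Subdivision s t) {δ : ℝ} :
    P.mesh < δ ↔ ∀ i < P.N, P.pt (i + 1) - P.pt i < δ := by
  simp [mesh, Finset.sup'_lt_iff]

theorem mesh_nonneg (P : Subdivision s t) : 0 ≤ P.mesh :=
  (sub_nonneg.mpr (P.mono 0 P.pos)).trans (le_sup' (fun i => P.pt (i + 1) - P.pt i)
    (mem_range.mpr P.pos))

noncomputable def uniform (hst : s ≤ t) (n : ℕ) : Subdivision s t where
  N := n + 1
  pt i := s + i * ((t - s) / (n + 1))
  pos := n.succ_pos
  first := by simp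
  last := by push_cast; field_simp; ring
  mono i _ := by
    have : 0 ≤ (t - s) / (n + 1) := div_nonneg (sub_nonneg.mpr hst) (by positivity)
    push_cast; nlinarith

theorem exists_mesh_lt (hst : s ≤ t) {δ : ℝ} (hδ : 0 < δ) : ∃ P : Subdivision s t, P.mesh < δ := by
  obtain ⟨n, hn⟩ := exists_nat_gt ((t - s) / δ)
  refine ⟨uniform hst n, (mesh_lt_iff _).mpr fun i _ => ?_⟩
  have hgap : (uniform hst n).pt (i + 1) - (uniform hst n).pt i = (t - s) / (n + 1) := by
    simp only [uniform]; push_cast; ring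
  rw [hgap, div_lt_iff₀ (by positivity)]
  rw [div_lt_iff₀ hδ] at hn
  nlinarith

noncomputable def append (P : Subdivision s t) (Q : Subdivision t u) : Subdivision s u where
  N := P.N + Q.N
  pt i := if i ≤ P.N then P.pt i else Q.pt (i - P.N)
  pos := by have := P.pos; omega
  first := by simp [P.first]
  last := by simp [Q.pos.ne', Q.last]
  mono i hi := by
    split_ifs with h₁ h₂
    · exact P.mono i (by omega)
    · rw [show i = P.N by omega, P.last, Nat.add_sub_cancel_left]
      simpa only [Q.first] using Q.mono 0 Q.pos
    · omega
    · rw [show i + 1 - P.N = i - P.N + 1 by omega]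
      exact Q.mono _ (by omega)

theorem append_pt_of_le (P : Subdivision s t) (Q : Subdivision t u) {i : ℕ} (hi : i ≤ P.N) :
    (P.append Q).pt i = P.pt i :=
  if_pos hi

theorem append_pt_add (P : Subdivision s t) (Q : Subdivision t u) (k : ℕ) :
    (P.append Q).pt (P.N + k) = Q.pt k := by
  rcases k.eq_zero_or_pos with rfl | hk
  · rw [Nat.add_zero, append_pt_of_le P Q le_rfl, P.last, Q.first]
  · exact (if_neg (by omega)).trans (congrArg Q.pt (by omega))

theorem mesh_append_le (P : Subdivision s t) (Q : Subdivision t u) :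
    (P.append Q).mesh ≤ max P.mesh Q.mesh := by
  refine sup'_le _ _ fun i hi => ?_
  rcases lt_or_ge i P.N with h | h
  · rw [append_pt_of_le P Q h, append_pt_of_le P Q h.le]
    exact le_max_of_le_left (le_sup' (fun i => P.pt (i + 1) - P.pt i) (mem_range.mpr h))
  · obtain ⟨k, rfl⟩ := Nat.exists_eq_add_of_le h
    have hk : k < Q.N := by have := mem_range.mp hi; change _ < P.N + Q.N at this; omega
    rw [add_assoc, append_pt_add, append_pt_add]
    exact le_max_of_le_right (le_sup' (fun i => Q.pt (i + 1) - Q.pt i) (mem_range.mpr hk))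

def erase (P : Subdivision s t) (m : ℕ) (hm : m + 2 ≤ P.N) : Subdivision s t where
  N := P.N - 1
  pt i := P.pt (if i ≤ m then i else i + 1)
  pos := by omega
  first := by simp [P.first]
  last := by rw [if_neg (by omega), Nat.sub_add_cancel (by omega), P.last]
  mono i hi := P.pt_le_pt (by split_ifs <;> omega) (by split_ifs <;> omega)

def clamp {a b : ℝ} (Q : Subdivision s t) (hsa : s ≤ a) (hab : a ≤ b) (hbt : b ≤ t) :
    Subdivision a b where
  N := Q.N
  pt i := max a (min b (Q.pt i))
  pos := Q.pos
  first := by rw [Q.first, min_eq_right (hsa.trans hab), max_eq_left hsa]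
  last := by rw [Q.last, min_eq_left hbt, max_eq_right hab]
  mono i hi := max_le_max_left a (min_le_min_left b (Q.mono i hi))

noncomputable def controlMesh (ω : ℝ → ℝ → ℝ) (P : Subdivision s t) : ℝ :=
  (range P.N).sup' (nonempty_range_iff.mpr P.pos.ne') fun i => ω (P.pt i) (P.pt (i + 1))

theorem le_controlMesh (ω : ℝ → ℝ → ℝ) (P : Subdivision s t) {i : ℕ} (hi : i < P.N) :
    ω (P.pt i) (P.pt (i + 1)) ≤ P.controlMesh ω :=
  le_sup' (fun i => ω (P.pt i) (P.pt (i + 1))) (mem_range.mpr hi)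

noncomputable def fine (s t : ℝ) : Filter (Subdivision s t) :=
  comap mesh (𝓝 0)

theorem hasBasis_fine (s t : ℝ) :
    (fine s t).HasBasis (fun δ : ℝ => 0 < δ) fun δ => {P | P.mesh < δ} :=
  (Metric.nhds_basis_ball.comap mesh).congr (fun _ => Iff.rfl) fun δ _ => by
    ext P
    simp [abs_of_nonneg P.mesh_nonneg]

theorem fine_neBot (hst : s ≤ t) : (fine s t).NeBot :=
  (hasBasis_fine s t).neBot_iff.mpr fun hδ => exists_mesh_lt hst hδ

theorem tendsto_append_fine :
    Tendsto (fun PQ : Subdivision s t × Subdivision t u => PQ.1.append PQ.2)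
      (fine s t ×ˢ fine t u) (fine s u) := by
  refine tendsto_comap_iff.mpr (squeeze_zero (fun PQ => mesh_nonneg _)
    (fun PQ => mesh_append_le PQ.1 PQ.2) ?_)
  have hP : Tendsto (fun PQ : Subdivision s t × Subdivision t u => PQ.1.mesh)
      (fine s t ×ˢ fine t u) (𝓝 0) := tendsto_comap.comp tendsto_fst
  have hQ : Tendsto (fun PQ : Subdivision s t × Subdivision t u => PQ.2.mesh)
      (fine s t ×ˢ fine t u) (𝓝 0) := tendsto_comap.comp tendsto_snd
  simpa using hP.max hQ

end Subdivision

namespace IsControl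

variable {ω : ℝ → ℝ → ℝ} {s t : ℝ}

theorem nonneg (hω : IsControl ω) (hs : 0 ≤ s) (hst : s ≤ t) (ht : t ≤ 1) : 0 ≤ ω s t :=
  hω.2.2.1 s t hs hst ht

theorem mono (hω : IsControl ω) {s' t' : ℝ} (hs : 0 ≤ s) (hss' : s ≤ s') (hs't' : s' ≤ t')
    (ht't : t' ≤ t) (ht : t ≤ 1) : ω s' t' ≤ ω s t := by
  have h₁ := hω.2.2.2 s s' t' hs hss' hs't' (by linarith)
  have h₂ := hω.2.2.2 s t' t hs (by linarith) ht't ht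
  linarith [hω.nonneg hs hss' (by linarith), hω.nonneg (by linarith) ht't ht]

theorem nonneg_pt (hω : IsControl ω) (hs : 0 ≤ s) (ht : t ≤ 1) (P : Subdivision s t) {i : ℕ}
    (hi : i < P.N) : 0 ≤ ω (P.pt i) (P.pt (i + 1)) :=
  hω.nonneg (hs.trans (P.pt_mem_Icc hi.le).1) (P.mono i hi) ((P.pt_mem_Icc hi).2.trans ht)

theorem controlMesh_nonneg (hω : IsControl ω) (hs : 0 ≤ s) (ht : t ≤ 1) (P : Subdivision s t) :
    0 ≤ P.controlMesh ω :=
  (hω.nonneg_pt hs ht P P.pos).trans (P.le_controlMesh ω P.pos)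

theorem sum_le (hω : IsControl ω) (hs : 0 ≤ s) (ht : t ≤ 1) (P : Subdivision s t) :
    ∑ i ∈ range P.N, ω (P.pt i) (P.pt (i + 1)) ≤ ω s t := by
  have key : ∀ n ≤ P.N, ∑ i ∈ range n, ω (P.pt i) (P.pt (i + 1)) ≤ ω s (P.pt n) := by
    intro n hn
    induction n with
    | zero => simpa [P.first] using hω.nonneg hs le_rfl (P.le.trans ht)
    | succ n ih =>
      rw [sum_range_succ]
      exact (add_le_add_left (ih (by omega)) _).trans (hω.2.2.2 s (P.pt n) (P.pt (n + 1)) hs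
        (P.pt_mem_Icc (by omega)).1 (P.mono n (by omega)) ((P.pt_mem_Icc hn).2.trans ht))
  simpa [P.last] using key P.N le_rfl

/-- Pigeonhole: the `N + 1` pairs of adjacent intervals have total `ω`-size at most `2 ω(s, t)`. -/
theorem exists_adjacent_le (hω : IsControl ω) (hs : 0 ≤ s) (ht : t ≤ 1) (P : Subdivision s t)
    {N : ℕ} (hN : P.N = N + 2) :
    ∃ m < N + 1, (N + 1) * (ω (P.pt m) (P.pt (m + 1)) + ω (P.pt (m + 1)) (P.pt (m + 2)))
      ≤ 2 * ω s t := by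
  set g : ℕ → ℝ := fun m => ω (P.pt m) (P.pt (m + 1)) + ω (P.pt (m + 1)) (P.pt (m + 2))
  obtain ⟨m, hm, hmin⟩ := exists_min_image (range (N + 1)) g ⟨0, mem_range.mpr N.succ_pos⟩
  refine ⟨m, mem_range.mp hm, ?_⟩
  have hinit := hω.sum_le hs ht P
  rw [hN, sum_range_succ] at hinit
  have htail := hω.sum_le hs ht P
  rw [hN, sum_range_succ'] at htail
  have hlast := hω.nonneg_pt hs ht P (i := N + 1) (by omega)
  have hfirst := hω.nonneg_pt hs ht P (i := 0) (by omega)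
  have hcard := card_nsmul_le_sum (range (N + 1)) g (g m) hmin
  rw [card_range, nsmul_eq_mul, sum_add_distrib] at hcard
  push_cast at hcard
  linarith

theorem sum_rpow_le (hω : IsControl ω) (hs : 0 ≤ s) (ht : t ≤ 1) {θ : ℝ} (hθ : 1 ≤ θ)
    (P : Subdivision s t) :
    ∑ i ∈ range P.N, ω (P.pt i) (P.pt (i + 1)) ^ θ ≤ P.controlMesh ω ^ (θ - 1) * ω s t := by
  calc ∑ i ∈ range P.N, ω (P.pt i) (P.pt (i + 1)) ^ θ
      ≤ ∑ i ∈ range P.N, P.controlMesh ω ^ (θ - 1) * ω (P.pt i) (P.pt (i + 1)) := by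
        refine sum_le_sum fun i hi => ?_
        have h₀ := hω.nonneg_pt hs ht P (mem_range.mp hi)
        calc ω (P.pt i) (P.pt (i + 1)) ^ θ
            = ω (P.pt i) (P.pt (i + 1)) ^ (θ - 1) * ω (P.pt i) (P.pt (i + 1)) := by
              rw [← Real.rpow_add_one' h₀ (by linarith), sub_add_cancel]
          _ ≤ _ := by
              gcongr
              exact P.le_controlMesh ω (mem_range.mp hi)
    _ ≤ P.controlMesh ω ^ (θ - 1) * ω s t := by
        rw [← mul_sum]
        have := hω.controlMesh_nonneg hs ht P
        gcongr
        exact hω.sum_le hs ht P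

theorem small_near_diagonal (hω : IsControl ω) {η : ℝ} (hη : 0 < η) :
    ∃ δ > 0, ∀ a b, 0 ≤ a → a ≤ b → b ≤ 1 → b - a < δ → ω a b < η := by
  set Δ : Set (ℝ × ℝ) := {p | 0 ≤ p.1 ∧ p.1 ≤ p.2 ∧ p.2 ≤ 1}
  have hΔ : IsCompact Δ := by
    refine (isCompact_Icc.prod isCompact_Icc : IsCompact (Set.Icc (0 : ℝ) 1 ×ˢ Set.Icc (0 : ℝ) 1))
      |>.of_isClosed_subset ?_ ?_
    · exact (isClosed_le continuous_const continuous_fst).inter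
        ((isClosed_le continuous_fst continuous_snd).inter
          (isClosed_le continuous_snd continuous_const))
    · rintro ⟨a, b⟩ ⟨h₁, h₂, h₃⟩
      exact ⟨⟨h₁, h₂.trans h₃⟩, ⟨h₁.trans h₂, h₃⟩⟩
  obtain ⟨δ, hδ, hclose⟩ := Metric.uniformContinuousOn_iff.mp
    (hΔ.uniformContinuousOn_of_continuous hω.1) η hη
  refine ⟨δ, hδ, fun a b ha hab hb hba => ?_⟩
  have hdist : dist (a, b) (a, a) < δ := by
    rw [Prod.dist_eq, dist_self, Real.dist_eq, abs_of_nonneg (sub_nonneg.mpr hab)]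
    exact max_lt hδ hba
  have := hclose (a, b) ⟨ha, hab, hb⟩ (a, a) ⟨ha, le_rfl, hab.trans hb⟩ hdist
  rw [Real.dist_eq, hω.2.1 a ha (hab.trans hb), sub_zero] at this
  exact (le_abs_self _).trans_lt this

theorem tendsto_controlMesh (hω : IsControl ω) (hs : 0 ≤ s) (ht : t ≤ 1) :
    Tendsto (Subdivision.controlMesh ω) (Subdivision.fine s t) (𝓝 0) := by
  refine ((Subdivision.hasBasis_fine s t).tendsto_iff Metric.nhds_basis_ball).mpr
    fun η hη => ?_
  obtain ⟨δ, hδ, hsmall⟩ := hω.small_near_diagonal hη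
  refine ⟨δ, hδ, fun P hP => ?_⟩
  have hlt : P.controlMesh ω < η := (sup'_lt_iff _).mpr fun i hi => by
    have hi := mem_range.mp hi
    exact hsmall _ _ (hs.trans (P.pt_mem_Icc hi.le).1) (P.mono i hi)
      ((P.pt_mem_Icc hi).2.trans ht) ((P.mesh_lt_iff.mp hP) i hi)
  rwa [Metric.mem_ball, Real.dist_0_eq_abs, abs_of_nonneg (hω.controlMesh_nonneg hs ht P)]

end IsControl

def ControlledBy {E : Type*} [SeminormedAddCommGroup E] (C α : ℝ) (ω : ℝ → ℝ → ℝ) (G : ℝ → E)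
    (s t : ℝ) : Prop :=
  ∀ a b, s ≤ a → a ≤ b → b ≤ t → ‖G b - G a‖ ≤ C * ω a b ^ α

theorem ControlledBy.mono {E : Type*} [SeminormedAddCommGroup E] {C α : ℝ} {ω : ℝ → ℝ → ℝ}
    {G : ℝ → E} {s t s' t' : ℝ} (h : ControlledBy C α ω G s t) (hs : s ≤ s') (ht : t' ≤ t) :
    ControlledBy C α ω G s' t' :=
  fun a b ha hab hb => h a b (hs.trans ha) hab (hb.trans ht)

theorem ControlledBy.const {E : Type*} [SeminormedAddCommGroup E] (α : ℝ) (ω : ℝ → ℝ → ℝ) (c : E)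
    (s t : ℝ) : ControlledBy 0 α ω (fun _ => c) s t :=
  fun _ _ _ _ _ => by simp

section StieltjesSum

variable {V : Type*} [NormedAddCommGroup V] [NormedSpace ℝ V] {s t u : ℝ}

def stieltjesSum (Ω G : ℝ → V →L[ℝ] V) (x : ℕ → ℝ) (n : ℕ) : V →L[ℝ] V :=
  ∑ i ∈ range n, (Ω (x (i + 1)) - Ω (x i)).comp (G (x i))

theorem stieltjesSum_append (Ω G : ℝ → V →L[ℝ] V) (P : Subdivision s t) (Q : Subdivision t u) :
    stieltjesSum Ω G (P.append Q).pt (P.append Q).N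
      = stieltjesSum Ω G P.pt P.N + stieltjesSum Ω G Q.pt Q.N := by
  rw [stieltjesSum, show (P.append Q).N = P.N + Q.N from rfl, sum_range_add]
  congr 1
  · refine sum_congr rfl fun i hi => ?_
    have hi := mem_range.mp hi
    rw [P.append_pt_of_le Q hi, P.append_pt_of_le Q hi.le]
  · refine sum_congr rfl fun k _ => ?_
    rw [add_assoc, P.append_pt_add, P.append_pt_add]

theorem stieltjesSum_eq_zero (Ω G : ℝ → V →L[ℝ] V) (P : Subdivision s s) :
    stieltjesSum Ω G P.pt P.N = 0 := by
  refine sum_eq_zero fun i hi => ?_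
  have hpt : ∀ j ≤ P.N, P.pt j = s := fun j hj =>
    le_antisymm (P.pt_mem_Icc hj).2 (P.pt_mem_Icc hj).1
  have hi := mem_range.mp hi
  rw [hpt i hi.le, hpt (i + 1) hi, sub_self, ContinuousLinearMap.zero_comp]

theorem stieltjesSum_erase (Ω G : ℝ → V →L[ℝ] V) (P : Subdivision s t) (m : ℕ)
    (hm : m + 2 ≤ P.N) :
    stieltjesSum Ω G P.pt P.N = stieltjesSum Ω G (P.erase m hm).pt (P.erase m hm).N
      + (Ω (P.pt (m + 2)) - Ω (P.pt (m + 1))).comp (G (P.pt (m + 1)) - G (P.pt m)) := by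
  obtain ⟨k, hk⟩ := Nat.exists_eq_add_of_le hm
  simp only [Subdivision.erase, hk, show m + 2 + k - 1 = m + k + 1 by omega]
  clear hk
  induction k with
  | zero =>
    have hlow : ∑ i ∈ range m, (Ω (P.pt (if i + 1 ≤ m then i + 1 else i + 1 + 1))
          - Ω (P.pt (if i ≤ m then i else i + 1))).comp (G (P.pt (if i ≤ m then i else i + 1)))
        = ∑ i ∈ range m, (Ω (P.pt (i + 1)) - Ω (P.pt i)).comp (G (P.pt i)) :=
      sum_congr rfl fun i hi => by
        rw [if_pos (show i + 1 ≤ m from mem_range.mp hi), if_pos (mem_range.mp hi).le]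
    simp only [stieltjesSum, Nat.add_zero, sum_range_succ]
    rw [hlow, if_pos le_rfl, if_neg (show ¬m + 1 ≤ m by omega)]
    simp only [ContinuousLinearMap.sub_comp, ContinuousLinearMap.comp_sub]
    abel
  | succ k ih =>
    rw [show m + 2 + (k + 1) = m + 2 + k + 1 by omega,
      show m + (k + 1) + 1 = m + k + 1 + 1 by omega]
    simp only [stieltjesSum] at ih ⊢
    rw [sum_range_succ, sum_range_succ, ih, if_neg (by omega), if_neg (by omega),
      show m + k + 1 + 1 + 1 = m + 2 + k + 1 by omega, show m + k + 1 + 1 = m + 2 + k by omega]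
    abel

end StieltjesSum

section Young

variable {V : Type*} [NormedAddCommGroup V] [NormedSpace ℝ V] {ω : ℝ → ℝ → ℝ} {Ω G : ℝ → V →L[ℝ] V}
  {α β C s t : ℝ}

theorem norm_stieltjesSum_sub_le_sum (hα : 0 ≤ α) (hβ : 0 ≤ β) (hC : 0 ≤ C) (hω : IsControl ω)
    (hs : 0 ≤ s) (ht : t ≤ 1) (hΩ : ControlledBy 1 α ω Ω s t) (hG : ControlledBy C β ω G s t) :
    ∀ (N : ℕ) (P : Subdivision s t), P.N = N + 1 →
      ‖stieltjesSum Ω G P.pt P.N - (Ω t - Ω s).comp (G s)‖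
        ≤ C * ∑ k ∈ range N, (2 * ω s t / (k + 1)) ^ (α + β) := by
  intro N
  induction N with
  | zero =>
    intro P hP
    have hlast : P.pt 1 = t := by simpa [hP] using P.last
    simp [stieltjesSum, hP, P.first, hlast]
  | succ N ih =>
    intro P hP
    obtain ⟨m, hm, hcost⟩ := hω.exists_adjacent_le hs ht P hP
    have hm2 : m + 2 ≤ P.N := by omega
    have hmem : ∀ i ≤ m + 2, P.pt i ∈ Set.Icc s t := fun i hi => P.pt_mem_Icc (by omega)
    set a := ω (P.pt m) (P.pt (m + 1))
    set b := ω (P.pt (m + 1)) (P.pt (m + 2))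
    have ha : 0 ≤ a := hω.nonneg_pt hs ht P (by omega)
    have hb : 0 ≤ b := hω.nonneg_pt hs ht P (by omega)
    have hΔΩ : ‖Ω (P.pt (m + 2)) - Ω (P.pt (m + 1))‖ ≤ b ^ α := by
      simpa using hΩ _ _ (hmem _ (by omega)).1 (P.mono _ (by omega)) (hmem _ le_rfl).2
    have hΔG : ‖G (P.pt (m + 1)) - G (P.pt m)‖ ≤ C * a ^ β :=
      hG _ _ (hmem _ (by omega)).1 (P.mono _ (by omega)) (hmem _ (by omega)).2
    have herr : ‖(Ω (P.pt (m + 2)) - Ω (P.pt (m + 1))).comp (G (P.pt (m + 1)) - G (P.pt m))‖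
        ≤ C * (2 * ω s t / (N + 1)) ^ (α + β) :=
      calc _ ≤ b ^ α * (C * a ^ β) :=
            (ContinuousLinearMap.opNorm_comp_le _ _).trans
              (mul_le_mul hΔΩ hΔG (norm_nonneg _) (by positivity))
        _ = C * (b ^ α * a ^ β) := by ring
        _ ≤ C * (b + a) ^ (α + β) := by gcongr; exact Real.rpow_mul_rpow_le_add_rpow hb ha hα hβ
        _ ≤ C * (2 * ω s t / (N + 1)) ^ (α + β) := by
            gcongr
            rw [le_div_iff₀ (by positivity)]
            linarith
    have hIH := ih (P.erase m hm2) (by simp only [Subdivision.erase]; omega)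
    rw [stieltjesSum_erase Ω G P m hm2, add_sub_right_comm, sum_range_succ, mul_add]
    exact (norm_add_le _ _).trans (add_le_add hIH herr)

theorem norm_stieltjesSum_sub_le (hαβ : 1 < α + β) (hα : 0 ≤ α) (hβ : 0 ≤ β) (hC : 0 ≤ C)
    (hω : IsControl ω) (hs : 0 ≤ s) (ht : t ≤ 1) (hΩ : ControlledBy 1 α ω Ω s t)
    (hG : ControlledBy C β ω G s t) (P : Subdivision s t) :
    ‖stieltjesSum Ω G P.pt P.N - (Ω t - Ω s).comp (G s)‖
      ≤ C * (2 ^ (α + β) * zetaR (α + β)) * ω s t ^ (α + β) := by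
  obtain ⟨N, hN⟩ := Nat.exists_eq_add_of_le' P.pos
  rw [mul_assoc]
  exact (norm_stieltjesSum_sub_le_sum hα hβ hC hω hs ht hΩ hG N P hN).trans
    (by gcongr; exact sum_range_rpow_div_le hαβ (hω.nonneg hs P.le ht) N)

end Young

section Existence

variable {V : Type*} [NormedAddCommGroup V] [NormedSpace ℝ V] {ω : ℝ → ℝ → ℝ} {Ω G : ℝ → V →L[ℝ] V}
  {α β C s t : ℝ}

theorem norm_sum_stieltjesSum_clamp_sub_le (hαβ : 1 < α + β) (hα : 0 ≤ α) (hβ : 0 ≤ β)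
    (hC : 0 ≤ C) (hω : IsControl ω) (hs : 0 ≤ s) (ht : t ≤ 1) (hΩ : ControlledBy 1 α ω Ω s t)
    (hG : ControlledBy C β ω G s t) (P Q : Subdivision s t) :
    ‖∑ j ∈ range P.N, stieltjesSum Ω G (fun i => max (P.pt j) (min (P.pt (j + 1)) (Q.pt i))) Q.N
        - stieltjesSum Ω G P.pt P.N‖
      ≤ C * (2 ^ (α + β) * zetaR (α + β))
        * ∑ j ∈ range P.N, ω (P.pt j) (P.pt (j + 1)) ^ (α + β) := by
  rw [stieltjesSum, ← sum_sub_distrib, mul_sum]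
  refine (norm_sum_le _ _).trans (sum_le_sum fun j hj => ?_)
  have hj := mem_range.mp hj
  have hl := P.pt_mem_Icc hj.le
  have hr := P.pt_mem_Icc hj
  exact norm_stieltjesSum_sub_le hαβ hα hβ hC hω (hs.trans hl.1) (hr.2.trans ht)
    (hΩ.mono hl.1 hr.2) (hG.mono hl.1 hr.2) (Q.clamp hl.1 (P.mono j hj) hr.2)

theorem sum_stieltjesSum_clamp_comm (Ω G : ℝ → V →L[ℝ] V) (P Q : Subdivision s t) :
    ∑ j ∈ range P.N, stieltjesSum Ω G (fun i => max (P.pt j) (min (P.pt (j + 1)) (Q.pt i))) Q.N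
      = ∑ i ∈ range Q.N,
          stieltjesSum Ω G (fun j => max (Q.pt i) (min (Q.pt (i + 1)) (P.pt j))) P.N := by
  simp only [stieltjesSum]
  rw [sum_comm]
  refine sum_congr rfl fun i hi => sum_congr rfl fun j hj => ?_
  rcases clamp_comm_or_degenerate (P.mono j (mem_range.mp hj)) (Q.mono i (mem_range.mp hi)) with
    ⟨hlo, hhi⟩ | ⟨hdegP, hdegQ⟩
  · rw [hlo, hhi]
  · rw [hdegP, hdegQ, sub_self, sub_self, ContinuousLinearMap.zero_comp,
      ContinuousLinearMap.zero_comp]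

theorem norm_stieltjesSum_sub_stieltjesSum_le (hαβ : 1 < α + β) (hα : 0 ≤ α) (hβ : 0 ≤ β)
    (hC : 0 ≤ C) (hω : IsControl ω) (hs : 0 ≤ s) (ht : t ≤ 1) (hΩ : ControlledBy 1 α ω Ω s t)
    (hG : ControlledBy C β ω G s t) (P Q : Subdivision s t) :
    ‖stieltjesSum Ω G P.pt P.N - stieltjesSum Ω G Q.pt Q.N‖
      ≤ C * (2 ^ (α + β) * zetaR (α + β)) * ω s t
        * (P.controlMesh ω ^ (α + β - 1) + Q.controlMesh ω ^ (α + β - 1)) := by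
  set R := ∑ j ∈ range P.N,
    stieltjesSum Ω G (fun i => max (P.pt j) (min (P.pt (j + 1)) (Q.pt i))) Q.N
  have hP := norm_sum_stieltjesSum_clamp_sub_le hαβ hα hβ hC hω hs ht hΩ hG P Q
  have hQ := norm_sum_stieltjesSum_clamp_sub_le hαβ hα hβ hC hω hs ht hΩ hG Q P
  rw [← sum_stieltjesSum_clamp_comm] at hQ
  have hD : 0 ≤ C * (2 ^ (α + β) * zetaR (α + β)) :=
    mul_nonneg hC (mul_nonneg (by positivity) (zetaR_nonneg _))
  have hsumP := hω.sum_rpow_le hs ht hαβ.le P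
  have hsumQ := hω.sum_rpow_le hs ht hαβ.le Q
  calc ‖stieltjesSum Ω G P.pt P.N - stieltjesSum Ω G Q.pt Q.N‖
      = ‖(R - stieltjesSum Ω G Q.pt Q.N) - (R - stieltjesSum Ω G P.pt P.N)‖ := by
        congr 1; abel
    _ ≤ ‖R - stieltjesSum Ω G Q.pt Q.N‖ + ‖R - stieltjesSum Ω G P.pt P.N‖ := norm_sub_le _ _
    _ ≤ C * (2 ^ (α + β) * zetaR (α + β)) * (Q.controlMesh ω ^ (α + β - 1) * ω s t)
        + C * (2 ^ (α + β) * zetaR (α + β)) * (P.controlMesh ω ^ (α + β - 1) * ω s t) := by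
      gcongr
      exacts [hQ.trans (by gcongr), hP.trans (by gcongr)]
    _ = _ := by ring

theorem exists_tendsto_stieltjesSum [CompleteSpace V] (hαβ : 1 < α + β) (hα : 0 ≤ α)
    (hβ : 0 ≤ β) (hC : 0 ≤ C) (hω : IsControl ω) (hs : 0 ≤ s) (hst : s ≤ t) (ht : t ≤ 1)
    (hΩ : ControlledBy 1 α ω Ω s t) (hG : ControlledBy C β ω G s t) :
    ∃ L, Tendsto (fun P : Subdivision s t => stieltjesSum Ω G P.pt P.N)
      (Subdivision.fine s t) (𝓝 L) := by
  have := Subdivision.fine_neBot hst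
  refine cauchy_map_iff_exists_tendsto.mp (cauchy_map_iff.mpr ⟨inferInstance, ?_⟩)
  rw [tendsto_uniformity_iff_dist_tendsto_zero]
  set D := C * (2 ^ (α + β) * zetaR (α + β)) * ω s t
  have hmesh : Tendsto (fun PQ : Subdivision s t × Subdivision s t =>
      D * (PQ.1.controlMesh ω ^ (α + β - 1) + PQ.2.controlMesh ω ^ (α + β - 1)))
      (Subdivision.fine s t ×ˢ Subdivision.fine s t) (𝓝 0) := by
    have hpow := (hω.tendsto_controlMesh hs ht).rpow_const (p := α + β - 1) (Or.inr (by linarith))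
    rw [Real.zero_rpow (by linarith)] at hpow
    simpa using ((hpow.comp tendsto_fst).add (hpow.comp tendsto_snd)).const_mul D
  refine squeeze_zero (fun _ => dist_nonneg) (fun PQ => ?_) hmesh
  rw [dist_eq_norm]
  exact norm_stieltjesSum_sub_stieltjesSum_le hαβ hα hβ hC hω hs ht hΩ hG PQ.1 PQ.2

end Existence

section Integral

variable {V : Type*} [NormedAddCommGroup V] [NormedSpace ℝ V] {ω : ℝ → ℝ → ℝ} {Ω G : ℝ → V →L[ℝ] V}
  {α β B C r s t T : ℝ}

theorem rsLimit_iff_tendsto {L : V →L[ℝ] V} :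
    RSLimit Ω G s t L ↔ Tendsto (fun P : Subdivision s t => stieltjesSum Ω G P.pt P.N)
      (Subdivision.fine s t) (𝓝 L) := by
  rw [(Subdivision.hasBasis_fine s t).tendsto_iff Metric.nhds_basis_closedBall]
  simp [RSLimit, stieltjesSum, dist_eq_norm]

theorem tendsto_stieltjesSum_sub {L₁ L₂ : V →L[ℝ] V} (hrs : r ≤ s)
    (h₁ : Tendsto (fun P : Subdivision r s => stieltjesSum Ω G P.pt P.N)
      (Subdivision.fine r s) (𝓝 L₁))
    (h₂ : Tendsto (fun P : Subdivision r t => stieltjesSum Ω G P.pt P.N)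
      (Subdivision.fine r t) (𝓝 L₂)) :
    Tendsto (fun P : Subdivision s t => stieltjesSum Ω G P.pt P.N)
      (Subdivision.fine s t) (𝓝 (L₂ - L₁)) := by
  have := Subdivision.fine_neBot hrs
  rw [← map_snd_prod (Subdivision.fine r s) (Subdivision.fine s t), tendsto_map'_iff]
  refine ((h₂.comp Subdivision.tendsto_append_fine).sub (h₁.comp tendsto_fst)).congr fun PQ => ?_
  simp [stieltjesSum_append]

/-- `∫₀ᵗ dΩ · G`; a junk value where the Riemann–Stieltjes sums do not converge. -/
noncomputable def stieltjesIntegral (Ω G : ℝ → V →L[ℝ] V) (t : ℝ) : V →L[ℝ] V :=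
  limUnder (Subdivision.fine 0 t) fun P => stieltjesSum Ω G P.pt P.N

theorem stieltjesIntegral_zero (Ω G : ℝ → V →L[ℝ] V) : stieltjesIntegral Ω G 0 = 0 := by
  have := Subdivision.fine_neBot (le_refl (0 : ℝ))
  have hzero : (fun P : Subdivision 0 0 => stieltjesSum Ω G P.pt P.N) = fun _ => 0 :=
    funext (stieltjesSum_eq_zero Ω G)
  rw [stieltjesIntegral, hzero]
  exact tendsto_nhds_unique (tendsto_nhds_limUnder ⟨0, tendsto_const_nhds⟩) tendsto_const_nhds

theorem tendsto_stieltjesIntegral [CompleteSpace V] (hαβ : 1 < α + β) (hα : 0 ≤ α)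
    (hβ : 0 ≤ β) (hC : 0 ≤ C) (hω : IsControl ω) (ht₀ : 0 ≤ t) (ht : t ≤ 1)
    (hΩ : ControlledBy 1 α ω Ω 0 t) (hG : ControlledBy C β ω G 0 t) :
    Tendsto (fun P : Subdivision 0 t => stieltjesSum Ω G P.pt P.N) (Subdivision.fine 0 t)
      (𝓝 (stieltjesIntegral Ω G t)) :=
  tendsto_nhds_limUnder (exists_tendsto_stieltjesSum hαβ hα hβ hC hω le_rfl ht₀ ht hΩ hG)

/-- The increment of `∫ dΩ · G` over `[s, t]` is `(Ω t - Ω s) ∘ G s` up to Young's maximal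
error. -/
theorem controlledBy_stieltjesIntegral [CompleteSpace V] (hαβ : 1 < α + β) (hα : 0 ≤ α)
    (hβ : 0 ≤ β) (hC : 0 ≤ C) (hω : IsControl ω) (hT : T ≤ 1) (hΩ : ControlledBy 1 α ω Ω 0 T)
    (hG : ControlledBy C β ω G 0 T) (hGB : ∀ a, 0 ≤ a → a ≤ T → ‖G a‖ ≤ B) :
    ControlledBy (B + C * (2 ^ (α + β) * zetaR (α + β)) * ω 0 T ^ β) α ω
      (stieltjesIntegral Ω G) 0 T := by
  intro s t hs hst htT
  have ht : t ≤ 1 := htT.trans hT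
  have hs₁ : s ≤ T := hst.trans htT
  have hJ : ∀ r, 0 ≤ r → r ≤ T → Tendsto (fun P : Subdivision 0 r => stieltjesSum Ω G P.pt P.N)
      (Subdivision.fine 0 r) (𝓝 (stieltjesIntegral Ω G r)) := fun r hr hrT =>
    tendsto_stieltjesIntegral hαβ hα hβ hC hω hr (hrT.trans hT) (hΩ.mono le_rfl hrT)
      (hG.mono le_rfl hrT)
  have hlim := tendsto_stieltjesSum_sub hs (hJ s hs hs₁) (hJ t (hs.trans hst) htT)
  have := Subdivision.fine_neBot hst
  set Ξ := (Ω t - Ω s).comp (G s)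
  set D := 2 ^ (α + β) * zetaR (α + β)
  have hD : 0 ≤ D := mul_nonneg (by positivity) (zetaR_nonneg _)
  have hωst : 0 ≤ ω s t := hω.nonneg hs hst ht
  have hyoung : ‖stieltjesIntegral Ω G t - stieltjesIntegral Ω G s - Ξ‖ ≤ C * D * ω s t ^ (α + β) :=
    le_of_tendsto' (hlim.sub_const Ξ).norm fun P =>
      norm_stieltjesSum_sub_le hαβ hα hβ hC hω hs ht (hΩ.mono hs htT) (hG.mono hs htT) P
  have hΞ : ‖Ξ‖ ≤ ω s t ^ α * B :=
    (ContinuousLinearMap.opNorm_comp_le _ _).trans (mul_le_mul (by simpa using hΩ s t hs hst htT)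
      (hGB s hs hs₁) (norm_nonneg _) (by positivity))
  have hsplit : ω s t ^ (α + β) ≤ ω s t ^ α * ω 0 T ^ β := by
    rw [Real.rpow_add' hωst (by linarith)]
    gcongr
    exact hω.mono le_rfl hs hst htT hT
  calc ‖stieltjesIntegral Ω G t - stieltjesIntegral Ω G s‖
      ≤ ‖Ξ‖ + ‖stieltjesIntegral Ω G t - stieltjesIntegral Ω G s - Ξ‖ :=
        norm_le_norm_add_norm_sub' _ _
    _ ≤ ω s t ^ α * B + C * D * (ω s t ^ α * ω 0 T ^ β) := by
        gcongr
        exact hyoung.trans (by gcongr)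
    _ = (B + C * D * ω 0 T ^ β) * ω s t ^ α := by ring

end Integral

section Iterated

variable {V : Type*} [NormedAddCommGroup V] [NormedSpace ℝ V] [CompleteSpace V]
  {ω : ℝ → ℝ → ℝ} {Ω : ℝ → V →L[ℝ] V} {α T : ℝ}

noncomputable def iteratedIntegral (Ω : ℝ → V →L[ℝ] V) : ℕ → ℝ → V →L[ℝ] V
  | 0 => fun _ => ContinuousLinearMap.id ℝ V
  | n + 1 => stieltjesIntegral Ω (iteratedIntegral Ω n)

theorem controlledBy_iteratedIntegral_succ (hαα : 1 < α + α) (hα : 0 ≤ α) (hT₀ : 0 ≤ T)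
    (hT : T ≤ 1) (hω : IsControl ω) (hΩ : ControlledBy 1 α ω Ω 0 T) (n : ℕ) :
    ControlledBy ((ω 0 T ^ α * (1 + 2 ^ (α + α) * zetaR (α + α))) ^ n) α ω
      (iteratedIntegral Ω (n + 1)) 0 T := by
  have hK : 0 ≤ ω 0 T ^ α * (1 + 2 ^ (α + α) * zetaR (α + α)) :=
    mul_nonneg (Real.rpow_nonneg (hω.nonneg le_rfl hT₀ hT) α)
      (by have := zetaR_nonneg (α + α); positivity)
  induction n with
  | zero =>
    simpa [iteratedIntegral] using controlledBy_stieltjesIntegral hαα hα hα le_rfl hω hT hΩ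
      (ControlledBy.const α ω (ContinuousLinearMap.id ℝ V) 0 T)
      (fun _ _ _ => ContinuousLinearMap.norm_id_le)
  | succ n ih =>
    have hbound : ∀ a, 0 ≤ a → a ≤ T →
        ‖iteratedIntegral Ω (n + 1) a‖ ≤ _ ^ n * ω 0 T ^ α := fun a ha haT => by
      have := ih 0 a le_rfl ha haT
      rw [iteratedIntegral, stieltjesIntegral_zero, sub_zero] at this
      have hmono : ω 0 a ^ α ≤ ω 0 T ^ α := Real.rpow_le_rpow (hω.nonneg le_rfl ha (haT.trans hT))
        (hω.mono le_rfl le_rfl ha haT hT) hα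
      exact this.trans (mul_le_mul_of_nonneg_left hmono (pow_nonneg hK n))
    show ControlledBy _ α ω (stieltjesIntegral Ω (iteratedIntegral Ω (n + 1))) 0 T
    convert controlledBy_stieltjesIntegral hαα hα hα (pow_nonneg hK n) hω hT hΩ ih hbound using 1
    ring

end Iterated

/-- The iterated Young integrals `I^0 = Id`, `I^{n+1}(t) = ∫_0^t dΩ · I^n`
exist on `[0,T]` and satisfy `‖I^n(t) − I^n(s)‖ ≤ K^{n−1} ω(s,t)^{1/q}` with
`K = ω(0,T)^{1/q} (1 + 2^{2/q} ζ(2/q))`. -/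
theorem statement4 (q T : ℝ) (hq1 : 1 ≤ q) (hq2 : q < 2) (hT0 : 0 < T) (hT1 : T ≤ 1)
    (V : Type u) [NormedAddCommGroup V] [NormedSpace ℝ V] [CompleteSpace V]
    (ω : ℝ → ℝ → ℝ) (hω : IsControl ω)
    (Ω : ℝ → V →L[ℝ] V)
    (hΩ : ∀ s t, 0 ≤ s → s ≤ t → t ≤ 1 → ‖Ω t - Ω s‖ ≤ ω s t ^ (1 / q)) :
    ∃ I : ℕ → ℝ → V →L[ℝ] V,
      (∀ t, I 0 t = ContinuousLinearMap.id ℝ V) ∧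
      (∀ n, I (n + 1) 0 = 0) ∧
      (∀ n t, 0 ≤ t → t ≤ T → RSLimit Ω (I n) 0 t (I (n + 1) t)) ∧
      (∀ n, 1 ≤ n → ∀ s t, 0 ≤ s → s ≤ t → t ≤ T →
        ‖I n t - I n s‖
          ≤ (ω 0 T ^ (1 / q) * (1 + 2 ^ ((2 : ℝ) / q) * zetaR (2 / q))) ^ (n - 1)
            * ω s t ^ (1 / q)) := by
  have hα : 0 ≤ 1 / q := by positivity
  have hαα : (1 : ℝ) / q + 1 / q = 2 / q := by ring
  have hθ : 1 < 1 / q + 1 / q := by rw [hαα, lt_div_iff₀ (by linarith)]; linarith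
  have hΩ' : ControlledBy 1 (1 / q) ω Ω 0 T := fun a b ha hab hb => by
    simpa using hΩ a b ha hab (hb.trans hT1)
  have hI := controlledBy_iteratedIntegral_succ hθ hα hT0.le hT1 hω hΩ'
  refine ⟨iteratedIntegral Ω, fun _ => rfl, fun _ => stieltjesIntegral_zero Ω _,
    fun n t ht₀ htT => rsLimit_iff_tendsto.mpr ?_, ?_⟩
  · have hcontrolled : ∃ C, 0 ≤ C ∧ ControlledBy C (1 / q) ω (iteratedIntegral Ω n) 0 t := by
      rcases n with _ | n
      · exact ⟨0, le_rfl, ControlledBy.const _ ω _ 0 t⟩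
      · have := hω.nonneg le_rfl hT0.le hT1
        have := zetaR_nonneg (1 / q + 1 / q)
        exact ⟨_, by positivity, (hI n).mono le_rfl htT⟩
    obtain ⟨C, hC, hG⟩ := hcontrolled
    exact tendsto_stieltjesIntegral hθ hα hα hC hω ht₀ (htT.trans hT1) (hΩ'.mono le_rfl htT) hG
  · rintro (_ | n) hn s t hs hst htT
    · omega
    · have := hI n s t hs hst htT
      rw [hαα] at this
      simpa using this
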